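/- For the binary two-component channel example, there exists a choice of auxiliary random variables and deterministic maps of the required form achieving min{I(U,V;Y), I(U;X|V,T)} ≥ 5/3 bits; namely, taking α = 1/3 in the construction U = (A,Ũ) uniform, σ ~ Bernoulli(1/3), Ṽ = A·σ, V = (Ṽ,σ), T = S⁽Ṽ⁾, X = (A, Ũ ⊕ T) yields I(U,V;Y) ≥ 5/3 and I(U;X|V,T) = 5/3. Since 5/3 > log₂ 3, the achievable value exceeds log₂ 3. -/

import Mathlib

open scoped BigOperators Classical
open Real Finset

noncomputable section

/-- A probability mass function on a finite sample space. -/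
structure FinProb (Ω : Type*) [Fintype Ω] where
  p : Ω → ℝ
  nonneg : ∀ ω, 0 ≤ p ω
  sum_one : ∑ ω, p ω = 1

namespace FinProb

variable {Ω : Type*} [Fintype Ω]

/-- Probability of an event. -/
def pr (μ : FinProb Ω) (E : Ω → Prop) : ℝ := ∑ ω, if E ω then μ.p ω else 0

/-- Distribution of a random variable. -/
def dist (μ : FinProb Ω) {α : Type*} [Fintype α] (X : Ω → α) (x : α) : ℝ :=
  μ.pr (fun ω => X ω = x)

/-- Shannon entropy (in bits) of a finite random variable. -/
def H (μ : FinProb Ω) {α : Type*} [Fintype α] (X : Ω → α) : ℝ :=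
  ∑ x, -(μ.dist X x) * Real.logb 2 (μ.dist X x)

/-- Joint entropy H(X,Y). -/
def H2 (μ : FinProb Ω) {α β : Type*} [Fintype α] [Fintype β] (X : Ω → α) (Y : Ω → β) : ℝ :=
  μ.H (fun ω => (X ω, Y ω))

/-- Conditional entropy H(X|Y). -/
def condH (μ : FinProb Ω) {α β : Type*} [Fintype α] [Fintype β] (X : Ω → α) (Y : Ω → β) : ℝ :=
  μ.H2 X Y - μ.H Y

/-- Mutual information I(X;Y) in bits. -/
def mi (μ : FinProb Ω) {α β : Type*} [Fintype α] [Fintype β] (X : Ω → α) (Y : Ω → β) : ℝ :=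
  μ.H X + μ.H Y - μ.H2 X Y

/-- Conditional mutual information I(X;Y|Z) in bits. -/
def cmi (μ : FinProb Ω) {α β γ : Type*} [Fintype α] [Fintype β] [Fintype γ]
    (X : Ω → α) (Y : Ω → β) (Z : Ω → γ) : ℝ :=
  μ.H2 X Z + μ.H2 Y Z - μ.H (fun ω => (X ω, Y ω, Z ω)) - μ.H Z

/-- Conditional probability of event `A` given event `E`. -/
def cpr (μ : FinProb Ω) (A E : Ω → Prop) : ℝ :=
  μ.pr (fun ω => A ω ∧ E ω) / μ.pr E

/-- Conditional distribution of `X` given the event `E`. -/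
def distCond (μ : FinProb Ω) {α : Type*} [Fintype α] (X : Ω → α) (E : Ω → Prop) (x : α) : ℝ :=
  μ.cpr (fun ω => X ω = x) E

/-- Entropy of `X` under the conditional distribution given the event `E`. -/
def entCond (μ : FinProb Ω) {α : Type*} [Fintype α] (X : Ω → α) (E : Ω → Prop) : ℝ :=
  ∑ x, -(μ.distCond X E x) * Real.logb 2 (μ.distCond X E x)

/-- Conditional entropy H(X | T, E): entropy of `X` given the random variable `T`,
all within the event `E` (averaged over `T` with conditional weights). -/
def condHOn (μ : FinProb Ω) {α β : Type*} [Fintype α] [Fintype β]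
    (X : Ω → α) (T : Ω → β) (E : Ω → Prop) : ℝ :=
  ∑ t, μ.cpr (fun ω => T ω = t) E * μ.entCond X (fun ω => T ω = t ∧ E ω)

end FinProb

/-!
Every quantity in the statement is a function of the base tuple `(A, Ũ, σ, S)`, whose law the
hypothesis fixes, so it equals the same quantity computed for the explicit law on `Bool⁵`.
There `H(U,V) = 4/3 + log₂ 3`, `H(Y) = 2` and `H(U,V,Y) = 5/3 + log₂ 3`, so `I(U,V;Y) = 5/3`.
Given `(V,T)`, the inputs `U = (A, Ũ)` and `X = (A, Ũ ⊕ T)` determine each other, so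
`I(U;X|V,T) = H(U,V,T) - H(V,T) = (7/3 + log₂ 3) - (2/3 + log₂ 3) = 5/3`.
Finally `log₂ 3 < 5/3` because `3³ < 2⁵`.
-/

namespace FinProb

variable {Ω β α : Type*} [Fintype Ω] [Fintype β] [Fintype α] (μ : FinProb Ω)

theorem pr_congr {E E' : Ω → Prop} (h : ∀ ω, E ω ↔ E' ω) : μ.pr E = μ.pr E' :=
  Finset.sum_congr rfl fun ω _ => if_congr (h ω) rfl rfl

theorem dist_comp (W : Ω → β) (G : β → α) (x : α) :
    μ.dist (fun ω => G (W ω)) x = ∑ w, if G w = x then μ.dist W w else 0 := by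
  simp only [dist, pr, ← Finset.sum_filter]
  rw [← Finset.sum_fiberwise_of_maps_to (g := W) (t := univ.filter fun w => G w = x)]
  · refine Finset.sum_congr rfl fun w hw => Finset.sum_congr ?_ fun _ _ => rfl
    ext ω
    simp only [mem_filter, mem_univ, true_and] at hw ⊢
    exact ⟨And.right, fun h => ⟨h ▸ hw, h⟩⟩
  · intro ω hω
    simpa using hω

variable {ν : FinProb β} {W : Ω → β}

theorem dist_comp_eq (hW : ∀ w, μ.dist W w = ν.p w) (G : β → α) (x : α) :
    μ.dist (fun ω => G (W ω)) x = ν.dist G x := by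
  simp only [dist_comp, hW]
  rfl

theorem H_comp_eq (hW : ∀ w, μ.dist W w = ν.p w) (G : β → α) :
    μ.H (fun ω => G (W ω)) = ν.H G := by
  simp only [H, μ.dist_comp_eq hW]

theorem mi_comp_eq (hW : ∀ w, μ.dist W w = ν.p w) {γ : Type*} [Fintype γ]
    (F : β → α) (G : β → γ) :
    μ.mi (fun ω => F (W ω)) (fun ω => G (W ω)) = ν.mi F G := by
  simp only [mi, H2]
  rw [μ.H_comp_eq hW F, μ.H_comp_eq hW G, μ.H_comp_eq hW fun w => (F w, G w)]

theorem cmi_comp_eq (hW : ∀ w, μ.dist W w = ν.p w) {γ δ : Type*} [Fintype γ] [Fintype δ]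
    (F : β → α) (G : β → γ) (K : β → δ) :
    μ.cmi (fun ω => F (W ω)) (fun ω => G (W ω)) (fun ω => K (W ω)) = ν.cmi F G K := by
  simp only [cmi, H2]
  rw [μ.H_comp_eq hW K, μ.H_comp_eq hW fun w => (F w, K w),
    μ.H_comp_eq hW fun w => (G w, K w), μ.H_comp_eq hW fun w => (F w, G w, K w)]

end FinProb

namespace Real

theorem logb_two_one_div_pow_mul_three (k : ℕ) :
    logb 2 (1 / (2 ^ k * 3)) = -(k + logb 2 3) := by
  rw [one_div, logb_inv, logb_mul (by positivity) (by norm_num), logb_pow,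
    logb_self_eq_one one_lt_two, mul_one]

theorem logb_two_one_div_three : logb 2 (1 / 3) = -logb 2 3 := by
  rw [one_div, logb_inv]

theorem logb_two_one_div_four : logb 2 (1 / 4) = -2 := by
  rw [one_div, logb_inv, show (4 : ℝ) = 2 ^ 2 by norm_num, logb_pow,
    logb_self_eq_one one_lt_two]
  norm_num

theorem logb_two_one_div_six : logb 2 (1 / 6) = -(1 + logb 2 3) := by
  have h := logb_two_one_div_pow_mul_three 1
  norm_num at h
  linarith

theorem logb_two_one_div_twelve : logb 2 (1 / 12) = -(2 + logb 2 3) := by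
  have h := logb_two_one_div_pow_mul_three 2
  norm_num at h
  linarith

theorem logb_two_one_div_twentyFour : logb 2 (1 / 24) = -(3 + logb 2 3) := by
  have h := logb_two_one_div_pow_mul_three 3
  norm_num at h
  linarith

theorem logb_two_three_lt_five_div_three : logb 2 3 < 5 / 3 := by
  rw [logb, div_lt_iff₀ (log_pos one_lt_two)]
  have h : log (3 ^ 3) < log (2 ^ 5) := log_lt_log (by norm_num) (by norm_num)
  rw [log_pow, log_pow] at h
  push_cast at h
  linarith

end Real

/-- A sample `(a, ũ, σ, s)` of the base variables `(A, Ũ, σ, S)`. -/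
abbrev Sample := Bool × Bool × Bool × (Bool × Bool)

namespace Sample

def law : FinProb Sample where
  p := fun ⟨_, _, b, _⟩ => 1 / 4 * (if b then (1 / 3 : ℝ) else 1 - 1 / 3) * (1 / 4)
  nonneg := by rintro ⟨_, _, b, _⟩; cases b <;> norm_num
  sum_one := by simp only [Fintype.sum_prod_type, Fintype.sum_bool]; norm_num

def vTilde (w : Sample) : Bool := if w.2.2.1 then w.1 else false
def u (w : Sample) : Bool × Bool := (w.1, w.2.1)
def v (w : Sample) : Bool × Bool := (w.vTilde, w.2.2.1)
def t (w : Sample) : Bool := if w.vTilde then w.2.2.2.2 else w.2.2.2.1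
def x (w : Sample) : Bool × Bool := (w.1, xor w.2.1 w.t)
def y (w : Sample) : Bool × Bool := (w.1, xor w.x.2 (if w.1 then w.2.2.2.2 else w.2.2.2.1))

theorem H_u_v : law.H (fun w => (w.u, w.v)) = 4 / 3 + logb 2 3 := by
  simp only [FinProb.H, FinProb.dist, FinProb.pr, law, u, v, vTilde, Fintype.sum_prod_type,
    Fintype.sum_bool]
  norm_num [logb_two_one_div_six, logb_two_one_div_twelve]
  ring

theorem H_y : law.H y = 2 := by
  simp only [FinProb.H, FinProb.dist, FinProb.pr, law, y, x, t, vTilde, Fintype.sum_prod_type,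
    Fintype.sum_bool]
  norm_num [logb_two_one_div_four]

theorem H_u_v_y : law.H (fun w => ((w.u, w.v), w.y)) = 5 / 3 + logb 2 3 := by
  simp only [FinProb.H, FinProb.dist, FinProb.pr, law, u, v, y, x, t, vTilde,
    Fintype.sum_prod_type, Fintype.sum_bool]
  norm_num [logb_two_one_div_six, logb_two_one_div_twelve]
  ring

theorem H_v_t : law.H (fun w => (w.v, w.t)) = 2 / 3 + logb 2 3 := by
  simp only [FinProb.H, FinProb.dist, FinProb.pr, law, v, t, vTilde, Fintype.sum_prod_type,
    Fintype.sum_bool]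
  norm_num [logb_two_one_div_three, logb_two_one_div_twelve]
  ring

theorem H_u_v_t : law.H (fun w => (w.u, w.v, w.t)) = 7 / 3 + logb 2 3 := by
  simp only [FinProb.H, FinProb.dist, FinProb.pr, law, u, v, t, vTilde, Fintype.sum_prod_type,
    Fintype.sum_bool]
  norm_num [logb_two_one_div_twelve, logb_two_one_div_twentyFour]
  ring

theorem H_x_v_t : law.H (fun w => (w.x, w.v, w.t)) = 7 / 3 + logb 2 3 := by
  simp only [FinProb.H, FinProb.dist, FinProb.pr, law, x, v, t, vTilde, Fintype.sum_prod_type,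
    Fintype.sum_bool]
  norm_num [logb_two_one_div_twelve, logb_two_one_div_twentyFour]
  ring

theorem H_u_x_v_t : law.H (fun w => (w.u, w.x, w.v, w.t)) = 7 / 3 + logb 2 3 := by
  simp only [FinProb.H, FinProb.dist, FinProb.pr, law, u, x, v, t, vTilde,
    Fintype.sum_prod_type, Fintype.sum_bool]
  norm_num [logb_two_one_div_twelve, logb_two_one_div_twentyFour]
  ring

theorem mi_u_v_y : law.mi (fun w => (w.u, w.v)) y = 5 / 3 := by
  rw [FinProb.mi, FinProb.H2, H_u_v, H_y, H_u_v_y]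
  ring

theorem cmi_u_x_v_t : law.cmi u x (fun w => (w.v, w.t)) = 5 / 3 := by
  rw [FinProb.cmi, FinProb.H2, FinProb.H2, H_u_v_t, H_x_v_t, H_u_x_v_t, H_v_t]
  ring

theorem dist_eq_law {Ω : Type*} [Fintype Ω] (μ : FinProb Ω) (A Ut σv : Ω → Bool)
    (S : Ω → Bool × Bool)
    (hjoint : ∀ (a u b : Bool) (s : Bool × Bool),
      μ.pr (fun ω => A ω = a ∧ Ut ω = u ∧ σv ω = b ∧ S ω = s)
        = 1 / 4 * (if b then (1 / 3 : ℝ) else 1 - 1 / 3) * (1 / 4))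
    (w : Sample) : μ.dist (fun ω => (A ω, Ut ω, σv ω, S ω)) w = law.p w := by
  obtain ⟨a, u, b, s⟩ := w
  exact (μ.pr_congr fun ω => by simp only [Prod.mk.injEq]).trans (hjoint a u b s)

end Sample

/-- Taking `α = 1/3` in the construction yields
`min{I(U,V;Y), I(U;X|V,T)} ≥ 5/3` bits, and `5/3 > log₂ 3`. -/
theorem stmt6 {Ω : Type} [Fintype Ω] (μ : FinProb Ω)
    (A Ut σv : Ω → Bool) (S : Ω → Bool × Bool)
    (hjoint : ∀ (a u b : Bool) (s : Bool × Bool),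
      μ.pr (fun ω => A ω = a ∧ Ut ω = u ∧ σv ω = b ∧ S ω = s)
        = 1 / 4 * (if b then (1 / 3 : ℝ) else 1 - 1 / 3) * (1 / 4)) :
    let Vt : Ω → Bool := fun ω => if σv ω then A ω else false
    let T : Ω → Bool := fun ω => if Vt ω then (S ω).2 else (S ω).1
    let X : Ω → Bool × Bool := fun ω => (A ω, xor (Ut ω) (T ω))
    let Y : Ω → Bool × Bool :=
      fun ω => (A ω, xor (X ω).2 (if A ω then (S ω).2 else (S ω).1))
    (5 / 3 : ℝ) ≤ min (μ.mi (fun ω => ((A ω, Ut ω), (Vt ω, σv ω))) Y)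
        (μ.cmi (fun ω => (A ω, Ut ω)) X (fun ω => ((Vt ω, σv ω), T ω))) ∧
    Real.logb 2 3 < 5 / 3 := by
  intro Vt T X Y
  have hW := Sample.dist_eq_law μ A Ut σv S hjoint
  refine ⟨le_min (le_of_eq ?_) (le_of_eq ?_), logb_two_three_lt_five_div_three⟩
  · exact (μ.mi_comp_eq hW (fun w => (w.u, w.v)) Sample.y |>.trans Sample.mi_u_v_y).symm
  · exact (μ.cmi_comp_eq hW Sample.u Sample.x (fun w => (w.v, w.t)) |>.trans
      Sample.cmi_u_x_v_t).symm
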